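/- arXiv:2012.13555 — 4 statements merged into one kernel-verified Lean document; each statement's English description precedes it below -/
import Mathlib

section
/- For r ≥ 3 and u₁, u₂ ∈ V ∩ L^{r+1}, one has |b(u₁,u₂,u₁)| ≤ ‖u₁‖_{L^{r+1}}^{(r+1)/(r-1)} ‖u₁‖_{L²}^{(r-3)/(r-1)} ‖u₂‖_V. -/
open MeasureTheory Real
noncomputable section

/-- Euclidean 3-space, used both as the periodic box parametrization and target. -/
abbrev E3 := EuclideanSpace ℝ (Fin 3)

/-- The fundamental domain `[0,L]³` of the torus `T³`. -/
def box (L : ℝ) : Set E3 := {x | ∀ i, x i ∈ Set.Icc (0 : ℝ) L}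

/-- The standard basis vector `e_i`. -/
def e3 (i : Fin 3) : E3 := EuclideanSpace.single i 1

/-- `u` is `L`-periodic in each coordinate direction. -/
def Periodic3 (L : ℝ) {α : Type*} (u : E3 → α) : Prop :=
  ∀ (x : E3) (i : Fin 3), u (x + L • e3 i) = u x

/-- `|∇u|² = Σ_{i,j} (∂u_j/∂x_i)²`. -/
def gradNormSq (u : E3 → E3) (x : E3) : ℝ :=
  ∑ i, ∑ j, (fderiv ℝ u x (e3 i) j) ^ 2

/-- `|∇f|²` for a scalar function. -/
def gradNormSqScalar (f : E3 → ℝ) (x : E3) : ℝ :=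
  ∑ i, (fderiv ℝ f x (e3 i)) ^ 2

/-- `u` is divergence free. -/
def divFree (u : E3 → E3) : Prop := ∀ x, ∑ i, fderiv ℝ u x (e3 i) i = 0

/-- The Laplacian `Δu`. -/
def lap (u : E3 → E3) (x : E3) : E3 :=
  ∑ i, fderiv ℝ (fun y => fderiv ℝ u y (e3 i)) x (e3 i)

/-- The Navier–Stokes trilinear form `b(u,v,w) = ∫ (u·∇)v·w`. -/
def triB (L : ℝ) (u v w : E3 → E3) : ℝ :=
  ∫ x in box L, ∑ i, ∑ j, u x i * fderiv ℝ v x (e3 i) j * w x j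

/-- The `L^p` norm over the fundamental domain (for a real exponent `p`). -/
def LpNorm (L p : ℝ) (u : E3 → E3) : ℝ := (∫ x in box L, ‖u x‖ ^ p) ^ (1 / p)

/-- The square of the `V`-norm, `‖u‖_V² = ∫ |∇u|²`. -/
def VnormSq (L : ℝ) (u : E3 → E3) : ℝ := ∫ x in box L, gradNormSq u x

/-- The `V`-norm `‖u‖_V = ‖∇u‖_{L²}`. -/
def Vnorm (L : ℝ) (u : E3 → E3) : ℝ := Real.sqrt (VnormSq L u)

/-! Pointwise Cauchy–Schwarz gives `|(u·∇)v·u| ≤ |u|² |∇v|`, so Hölder with exponents `2, 2` yields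
`|b(u,v,u)| ≤ ‖u‖_{L⁴}² ‖v‖_V`. It remains to interpolate `L⁴` between `L^{r+1}` and `L²`: Hölder
with exponents `(r-1)/2` and `(r-1)/(r-3)` applied to `|u|⁴ = |u|^{2(r+1)/(r-1)} |u|^{2(r-3)/(r-1)}`
gives `‖u‖_{L⁴}⁴ ≤ ‖u‖_{L^{r+1}}^{2(r+1)/(r-1)} ‖u‖_{L²}^{2(r-3)/(r-1)}`. -/

theorem integral_norm_rpow_four_le {X F : Type*} [MeasurableSpace X] [NormedAddCommGroup F]
    {μ : Measure X} {f : X → F} {r : ℝ} (hr : 3 ≤ r)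
    (hf : MemLp f (ENNReal.ofReal (r + 1)) μ) (hf₂ : MemLp f 2 μ) :
    ∫ x, ‖f x‖ ^ (4 : ℝ) ∂μ ≤
      (∫ x, ‖f x‖ ^ (r + 1) ∂μ) ^ (2 / (r - 1)) *
        (∫ x, ‖f x‖ ^ (2 : ℝ) ∂μ) ^ ((r - 3) / (r - 1)) := by
  rcases hr.eq_or_lt with rfl | hr
  · norm_num
  have hr₁ : 0 < r - 1 := by linarith
  have hr₃ : 0 < r - 3 := by linarith
  have hα : 0 < 2 * (r + 1) / (r - 1) := by positivity
  have hβ : 0 < 2 * (r - 3) / (r - 1) := by positivity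
  have hpq : ((r - 1) / 2).HolderConjugate ((r - 1) / (r - 3)) := by
    rw [Real.holderConjugate_iff]
    refine ⟨by linarith, ?_⟩
    field_simp
    ring
  have hfα : MemLp (fun x => ‖f x‖ ^ (2 * (r + 1) / (r - 1))) (ENNReal.ofReal ((r - 1) / 2)) μ := by
    have := hf.norm_rpow_div (ENNReal.ofReal (2 * (r + 1) / (r - 1)))
    rwa [ENNReal.toReal_ofReal hα.le, ← ENNReal.ofReal_div_of_pos hα,
      show (r + 1) / (2 * (r + 1) / (r - 1)) = (r - 1) / 2 by field_simp] at this
  have hfβ : MemLp (fun x => ‖f x‖ ^ (2 * (r - 3) / (r - 1)))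
      (ENNReal.ofReal ((r - 1) / (r - 3))) μ := by
    have := hf₂.norm_rpow_div (ENNReal.ofReal (2 * (r - 3) / (r - 1)))
    rwa [ENNReal.toReal_ofReal hβ.le, show (2 : ENNReal) = ENNReal.ofReal 2 by simp,
      ← ENNReal.ofReal_div_of_pos hβ,
      show 2 / (2 * (r - 3) / (r - 1)) = (r - 1) / (r - 3) by field_simp] at this
  have holder := integral_mul_le_Lp_mul_Lq_of_nonneg hpq
    (ae_of_all _ fun x => by positivity) (ae_of_all _ fun x => by positivity) hfα hfβ
  have hsplit : ∀ x, ‖f x‖ ^ (2 * (r + 1) / (r - 1)) * ‖f x‖ ^ (2 * (r - 3) / (r - 1))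
      = ‖f x‖ ^ (4 : ℝ) := fun x => by
    rw [← Real.rpow_add' (norm_nonneg _) (by positivity)]
    congr 1
    field_simp
    ring
  have hpowα : ∀ x, (‖f x‖ ^ (2 * (r + 1) / (r - 1))) ^ ((r - 1) / 2) = ‖f x‖ ^ (r + 1) :=
    fun x => by
      rw [← Real.rpow_mul (norm_nonneg _)]
      congr 1
      field_simp
  have hpowβ : ∀ x, (‖f x‖ ^ (2 * (r - 3) / (r - 1))) ^ ((r - 1) / (r - 3)) = ‖f x‖ ^ (2 : ℝ) :=
    fun x => by
      rw [← Real.rpow_mul (norm_nonneg _)]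
      congr 1
      field_simp
  simpa only [hsplit, hpowα, hpowβ, one_div_div] using holder

theorem Continuous.memLp_restrict_of_isCompact {X F : Type*} [TopologicalSpace X]
    [T2Space X] [MeasurableSpace X] [OpensMeasurableSpace X] [NormedAddCommGroup F]
    {μ : Measure X} [IsFiniteMeasureOnCompacts μ] {f : X → F} (hf : Continuous f) {s : Set X}
    (hs : IsCompact s) (p : ENNReal) : MemLp f p (μ.restrict s) := by
  have : IsFiniteMeasure (μ.restrict s) := isFiniteMeasure_restrict.mpr hs.measure_lt_top.ne
  obtain ⟨C, hC⟩ := hs.exists_bound_of_continuousOn hf.continuousOn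
  exact MemLp.of_bound (hf.continuousOn.aestronglyMeasurable_of_isCompact hs hs.measurableSet) C
    ((ae_restrict_iff' hs.measurableSet).mpr (ae_of_all _ hC))

theorem Real.abs_sum_sum_mul_mul_le {ι κ : Type*} [Fintype ι] [Fintype κ]
    (a : ι → ℝ) (M : ι → κ → ℝ) (b : κ → ℝ) :
    |∑ i, ∑ j, a i * M i j * b j|
      ≤ √(∑ i, a i ^ 2) * √(∑ i, ∑ j, M i j ^ 2) * √(∑ j, b j ^ 2) := by
  have hrow : ∑ i, (∑ j, M i j * b j) ^ 2 ≤ (∑ i, ∑ j, M i j ^ 2) * ∑ j, b j ^ 2 := by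
    rw [Finset.sum_mul]
    exact Finset.sum_le_sum fun i _ => Finset.sum_mul_sq_le_sq_mul_sq _ _ _
  calc |∑ i, ∑ j, a i * M i j * b j| = |∑ i, a i * ∑ j, M i j * b j| := by
        simp only [Finset.mul_sum, mul_assoc]
    _ ≤ √((∑ i, a i ^ 2) * ∑ i, (∑ j, M i j * b j) ^ 2) :=
        Real.abs_le_sqrt (Finset.sum_mul_sq_le_sq_mul_sq _ _ _)
    _ ≤ √((∑ i, a i ^ 2) * ((∑ i, ∑ j, M i j ^ 2) * ∑ j, b j ^ 2)) := by gcongr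
    _ = _ := by rw [Real.sqrt_mul (by positivity), Real.sqrt_mul (by positivity), mul_assoc]

theorem isCompact_box (L : ℝ) : IsCompact (box L) := by
  have h : box L = (EuclideanSpace.equiv (Fin 3) ℝ).symm '' Set.univ.pi fun _ => Set.Icc 0 L := by
    ext x
    exact ⟨fun hx => ⟨EuclideanSpace.equiv (Fin 3) ℝ x, fun i _ => hx i, rfl⟩,
      by rintro ⟨y, hy, rfl⟩ i; exact hy i (Set.mem_univ i)⟩
  rw [h]
  exact (isCompact_univ_pi fun _ => isCompact_Icc).image
    (EuclideanSpace.equiv (Fin 3) ℝ).symm.continuous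

theorem continuous_gradNormSq {u : E3 → E3} (hu : ContDiff ℝ 1 u) :
    Continuous (gradNormSq u) := by
  have hDu := hu.continuous_fderiv one_ne_zero
  unfold gradNormSq
  fun_prop

theorem abs_triB_integrand_le (u v w : E3 → E3) (x : E3) :
    |∑ i, ∑ j, u x i * fderiv ℝ v x (e3 i) j * w x j|
      ≤ ‖u x‖ * √(gradNormSq v x) * ‖w x‖ := by
  simpa only [EuclideanSpace.norm_eq, Real.norm_eq_abs, sq_abs, gradNormSq] using
    Real.abs_sum_sum_mul_mul_le (fun i => u x i) (fun i j => fderiv ℝ v x (e3 i) j) (fun j => w x j)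

theorem abs_triB_le (L : ℝ) {u v w : E3 → E3} (hu : Continuous u) (hv : ContDiff ℝ 1 v)
    (hw : Continuous w) :
    |triB L u v w| ≤ ∫ x in box L, ‖u x‖ * √(gradNormSq v x) * ‖w x‖ := by
  have hg : Continuous fun x => ‖u x‖ * √(gradNormSq v x) * ‖w x‖ := by
    have := continuous_gradNormSq hv
    fun_prop
  exact norm_integral_le_of_norm_le
    (memLp_one_iff_integrable.mp (hg.memLp_restrict_of_isCompact (isCompact_box L) 1))
    (ae_of_all _ fun x => (Real.norm_eq_abs _).trans_le (abs_triB_integrand_le u v w x))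

theorem gradNormSq_nonneg (u : E3 → E3) (x : E3) : 0 ≤ gradNormSq u x := by
  unfold gradNormSq
  positivity

theorem abs_triB_le_LpNorm_four_sq_mul_Vnorm (L : ℝ) {u v : E3 → E3} (hu : Continuous u)
    (hv : ContDiff ℝ 1 v) : |triB L u v u| ≤ LpNorm L 4 u ^ 2 * Vnorm L v := by
  have hu₂ : Continuous fun x => ‖u x‖ ^ 2 := by fun_prop
  have holder := integral_mul_le_Lp_mul_Lq_of_nonneg Real.HolderConjugate.two_two
    (ae_of_all _ fun x => by positivity) (ae_of_all _ fun x => by positivity)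
    (hu₂.memLp_restrict_of_isCompact (μ := volume) (isCompact_box L) _)
    ((continuous_gradNormSq hv).sqrt.memLp_restrict_of_isCompact (isCompact_box L) _)
  have hI : 0 ≤ ∫ x in box L, ‖u x‖ ^ (4 : ℝ) := integral_nonneg fun x => by positivity
  calc |triB L u v u| ≤ ∫ x in box L, ‖u x‖ * √(gradNormSq v x) * ‖u x‖ := abs_triB_le L hu hv hu
    _ = ∫ x in box L, ‖u x‖ ^ 2 * √(gradNormSq v x) := by congr 1; ext x; ring
    _ ≤ _ := holder
    _ = LpNorm L 4 u ^ 2 * Vnorm L v := by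
      simp only [Real.rpow_two, ← pow_mul, Real.sq_sqrt (gradNormSq_nonneg v _)]
      rw [LpNorm, Vnorm, VnormSq, Real.sqrt_eq_rpow, ← Real.rpow_natCast, ← Real.rpow_mul hI]
      norm_num

theorem LpNorm_four_sq_le (L : ℝ) {r : ℝ} (hr : 3 ≤ r) {u : E3 → E3} (hu : Continuous u) :
    LpNorm L 4 u ^ 2
      ≤ LpNorm L (r + 1) u ^ ((r + 1) / (r - 1)) * LpNorm L 2 u ^ ((r - 3) / (r - 1)) := by
  have hr₁ : r - 1 ≠ 0 := by linarith
  have hI : ∀ p : ℝ, 0 ≤ ∫ x in box L, ‖u x‖ ^ p := fun p => integral_nonneg fun x => by positivity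
  calc LpNorm L 4 u ^ 2 = (∫ x in box L, ‖u x‖ ^ (4 : ℝ)) ^ (1 / 2 : ℝ) := by
        rw [LpNorm, ← Real.rpow_natCast, ← Real.rpow_mul (hI 4)]
        norm_num
    _ ≤ ((∫ x in box L, ‖u x‖ ^ (r + 1)) ^ (2 / (r - 1)) *
          (∫ x in box L, ‖u x‖ ^ (2 : ℝ)) ^ ((r - 3) / (r - 1))) ^ (1 / 2 : ℝ) := by
        gcongr
        exact integral_norm_rpow_four_le hr (hu.memLp_restrict_of_isCompact (isCompact_box L) _)
          (hu.memLp_restrict_of_isCompact (isCompact_box L) _)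
    _ = LpNorm L (r + 1) u ^ ((r + 1) / (r - 1)) * LpNorm L 2 u ^ ((r - 3) / (r - 1)) := by
        rw [Real.mul_rpow (by positivity [hI (r + 1)]) (by positivity [hI 2]), LpNorm, LpNorm,
          ← Real.rpow_mul (hI _), ← Real.rpow_mul (hI _), ← Real.rpow_mul (hI _),
          ← Real.rpow_mul (hI _)]
        congr 2 <;> field_simp

theorem stmt5_general (L r : ℝ) (hr : 3 ≤ r)
    (u₁ u₂ : E3 → E3)
    (h1 : ContDiff ℝ (⊤ : ℕ∞) u₁) (h2 : ContDiff ℝ (⊤ : ℕ∞) u₂) :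
    |triB L u₁ u₂ u₁|
      ≤ LpNorm L (r + 1) u₁ ^ ((r + 1) / (r - 1))
        * LpNorm L 2 u₁ ^ ((r - 3) / (r - 1)) * Vnorm L u₂ :=
  calc |triB L u₁ u₂ u₁| ≤ LpNorm L 4 u₁ ^ 2 * Vnorm L u₂ :=
        abs_triB_le_LpNorm_four_sq_mul_Vnorm L h1.continuous (h2.of_le (by simp))
    _ ≤ _ := mul_le_mul_of_nonneg_right (LpNorm_four_sq_le L hr h1.continuous) (Real.sqrt_nonneg _)

/-- For `r ≥ 3`,
`|b(u₁,u₂,u₁)| ≤ ‖u₁‖_{L^{r+1}}^{(r+1)/(r-1)} ‖u₁‖_{L²}^{(r-3)/(r-1)} ‖u₂‖_V`. -/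
theorem stmt5 (L r : ℝ) (hL : 0 < L) (hr : 3 ≤ r)
    (u₁ u₂ : E3 → E3)
    (h1 : ContDiff ℝ (⊤ : ℕ∞) u₁) (h2 : ContDiff ℝ (⊤ : ℕ∞) u₂)
    (h1p : Periodic3 L u₁) (h2p : Periodic3 L u₂)
    (h1d : divFree u₁) (h2d : divFree u₂) :
    |triB L u₁ u₂ u₁|
      ≤ LpNorm L (r + 1) u₁ ^ ((r + 1) / (r - 1))
        * LpNorm L 2 u₁ ^ ((r - 3) / (r - 1)) * Vnorm L u₂ :=
  stmt5_general L r hr u₁ u₂ h1 h2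
end
end

section
/- For every r ≥ 1 and all u, v ∈ L^{r+1}(T³;ℝ³), the nonlinear operator C(u) = P(|u|^{r-1}u) satisfies ⟨C(u)-C(v), u-v⟩ ≥ (1/2)‖|u|^{(r-1)/2}(u-v)‖_{L²}² + (1/2)‖|v|^{(r-1)/2}(u-v)‖_{L²}² ≥ 0. -/
open MeasureTheory Real
open scoped RealInnerProductSpace
noncomputable section

lemma dot_eq (a b : E3) : ∑ j, a j * b j = ⟪a, b⟫ := by
  simp [PiLp.inner_apply, mul_comm]

lemma ptwise (r : ℝ) (hr : 1 ≤ r) (a b : E3) :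
    (1/2) * (‖a‖ ^ (r-1) * ‖a - b‖^2) + (1/2) * (‖b‖ ^ (r-1) * ‖a - b‖^2)
      ≤ ∑ j, (‖a‖ ^ (r-1) * a j - ‖b‖ ^ (r-1) * b j) * (a j - b j) := by
  set A := ‖a‖ ^ (r-1) with hA
  set B := ‖b‖ ^ (r-1) with hB
  have key : ∑ j, (A * a j - B * b j) * (a j - b j)
      = A * ⟪a, a - b⟫ - B * ⟪b, a - b⟫ := by
    rw [← dot_eq, ← dot_eq, Finset.mul_sum, Finset.mul_sum, ← Finset.sum_sub_distrib]
    exact Finset.sum_congr rfl fun j _ => by simp [PiLp.sub_apply]; ring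
  rw [key]
  have hex : ‖a - b‖^2 = ‖a‖^2 - 2 * ⟪a, b⟫ + ‖b‖^2 := norm_sub_sq_real a b
  have ha2 : ⟪a, a - b⟫ = (‖a‖^2 - ‖b‖^2 + ‖a - b‖^2) / 2 := by
    rw [inner_sub_right, real_inner_self_eq_norm_sq]; linarith
  have hb2 : ⟪b, a - b⟫ = (‖a‖^2 - ‖b‖^2 - ‖a - b‖^2) / 2 := by
    rw [inner_sub_right, real_inner_self_eq_norm_sq, real_inner_comm]; linarith
  rw [ha2, hb2]
  have hmono : 0 ≤ (A - B) * (‖a‖^2 - ‖b‖^2) := by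
    rcases le_total ‖a‖ ‖b‖ with h | h
    · have h1 : A ≤ B := Real.rpow_le_rpow (norm_nonneg a) h (by linarith)
      have h2 : ‖a‖^2 ≤ ‖b‖^2 := by nlinarith [norm_nonneg a, norm_nonneg b]
      nlinarith
    · have h1 : B ≤ A := Real.rpow_le_rpow (norm_nonneg b) h (by linarith)
      have h2 : ‖b‖^2 ≤ ‖a‖^2 := by nlinarith [norm_nonneg a, norm_nonneg b]
      exact mul_nonneg (by linarith) (by linarith)
  nlinarith

lemma box_meas (L : ℝ) : MeasurableSet (box L) := by
  have : box L = ⋂ i, (fun x : E3 => x i) ⁻¹' Set.Icc 0 L := by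
    ext x; simp [box, Set.mem_iInter]
  rw [this]
  exact MeasurableSet.iInter fun i =>
    ((continuous_apply i).measurable.comp (PiLp.continuous_ofLp 2 _).measurable)
      measurableSet_Icc

/-- Monotonicity of `C(u) = P(|u|^{r-1}u)`: for `r ≥ 1`,
`⟨C(u)-C(v), u-v⟩ ≥ (1/2)‖|u|^{(r-1)/2}(u-v)‖_{L²}²
  + (1/2)‖|v|^{(r-1)/2}(u-v)‖_{L²}² ≥ 0`
(the pairing reduces to the pointwise dot product integral on the torus). -/
theorem stmt8 (L r : ℝ) (hL : 0 < L) (hr : 1 ≤ r)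
    (u v : E3 → E3)
    (h0 : IntegrableOn
      (fun x => ∑ j, (‖u x‖ ^ (r - 1) * u x j - ‖v x‖ ^ (r - 1) * v x j)
        * (u x j - v x j)) (box L))
    (h1 : IntegrableOn (fun x => ‖u x‖ ^ (r - 1) * ‖u x - v x‖ ^ 2) (box L))
    (h2 : IntegrableOn (fun x => ‖v x‖ ^ (r - 1) * ‖u x - v x‖ ^ 2) (box L)) :
    (1 / 2) * (∫ x in box L, ‖u x‖ ^ (r - 1) * ‖u x - v x‖ ^ 2)
        + (1 / 2) * (∫ x in box L, ‖v x‖ ^ (r - 1) * ‖u x - v x‖ ^ 2)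
      ≤ ∫ x in box L, ∑ j, (‖u x‖ ^ (r - 1) * u x j - ‖v x‖ ^ (r - 1) * v x j)
          * (u x j - v x j)
    ∧ 0 ≤ (1 / 2) * (∫ x in box L, ‖u x‖ ^ (r - 1) * ‖u x - v x‖ ^ 2)
        + (1 / 2) * (∫ x in box L, ‖v x‖ ^ (r - 1) * ‖u x - v x‖ ^ 2) := by
  have hnn1 : 0 ≤ ∫ x in box L, ‖u x‖ ^ (r - 1) * ‖u x - v x‖ ^ 2 :=
    setIntegral_nonneg (box_meas L) fun x _ =>
      mul_nonneg (Real.rpow_nonneg (norm_nonneg _) _) (sq_nonneg _)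
  have hnn2 : 0 ≤ ∫ x in box L, ‖v x‖ ^ (r - 1) * ‖u x - v x‖ ^ 2 :=
    setIntegral_nonneg (box_meas L) fun x _ =>
      mul_nonneg (Real.rpow_nonneg (norm_nonneg _) _) (sq_nonneg _)
  constructor
  · have hmono := setIntegral_mono_on
      ((h1.const_mul (1/2 : ℝ)).add (h2.const_mul (1/2 : ℝ))) h0 (box_meas L)
      (fun x _ => ptwise r hr (u x) (v x))
    have hsplit : ∫ x in box L,
        ((1/2) * (‖u x‖ ^ (r - 1) * ‖u x - v x‖ ^ 2)
          + (1/2) * (‖v x‖ ^ (r - 1) * ‖u x - v x‖ ^ 2))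
        = (1 / 2) * (∫ x in box L, ‖u x‖ ^ (r - 1) * ‖u x - v x‖ ^ 2)
          + (1 / 2) * (∫ x in box L, ‖v x‖ ^ (r - 1) * ‖u x - v x‖ ^ 2) := by
      rw [integral_add (h1.const_mul (1/2 : ℝ)) (h2.const_mul (1/2 : ℝ)),
        integral_const_mul, integral_const_mul]
    simp only [Pi.add_apply] at hmono
    rw [hsplit] at hmono
    exact hmono
  · positivity
end
end

section
/- Let r > 3 and μ, β > 0. The operator G(u) = μAu + B(u) + βC(u) satisfies ⟨G(u₁)-G(u₂), u₁-u₂⟩ + η₂‖u₁-u₂‖_{L²}² ≥ 0 for all u₁, u₂ ∈ V ∩ L^{r+1}, where η₂ = [(r-3)/(2μ(r-1))] (2/(βμ(r-1)))^{2/(r-3)}. -/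
/-!
Writing `w = u₁ - u₂`, the integrand of the pairing is nonnegative at every point: Young's
inequality bounds the convective term `(w·∇)w·u₂` by `(μ/2)|∇w|² + |w|²|u₂|²/(2μ)`, the damping
term is at least `(β/2)|u₂|^{r-1}|w|²`, and weighted AM–GM with weights `2/(r-1)` and
`(r-3)/(r-1)` gives `|u₂|²/(2μ) ≤ (β/2)|u₂|^{r-1} + η₂`, which absorbs the remainder.
-/

open MeasureTheory Real
noncomputable section

theorem half_norm_rpow_mul_norm_sub_sq_le_inner {F : Type*} [NormedAddCommGroup F]
    [InnerProductSpace ℝ F] {p : ℝ} (hp : 0 ≤ p) (a b : F) :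
    ‖b‖ ^ p / 2 * ‖a - b‖ ^ 2 ≤ inner ℝ (‖a‖ ^ p • a - ‖b‖ ^ p • b) (a - b) := by
  have hmono : 0 ≤ (‖a‖ ^ p - ‖b‖ ^ p) * (‖a‖ ^ 2 - ‖b‖ ^ 2) := by
    rcases le_total ‖a‖ ‖b‖ with h | h
    · exact mul_nonneg_of_nonpos_of_nonpos
        (sub_nonpos.2 (Real.rpow_le_rpow (norm_nonneg a) h hp))
        (sub_nonpos.2 (pow_le_pow_left₀ (norm_nonneg a) h 2))
    · exact mul_nonneg (sub_nonneg.2 (Real.rpow_le_rpow (norm_nonneg b) h hp))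
        (sub_nonneg.2 (pow_le_pow_left₀ (norm_nonneg b) h 2))
  have hid : inner ℝ (‖a‖ ^ p • a - ‖b‖ ^ p • b) (a - b)
      = (‖a‖ ^ p + ‖b‖ ^ p) / 2 * ‖a - b‖ ^ 2
        + (‖a‖ ^ p - ‖b‖ ^ p) * (‖a‖ ^ 2 - ‖b‖ ^ 2) / 2 := by
    simp only [inner_sub_left, inner_sub_right, real_inner_smul_left, real_inner_self_eq_norm_sq,
      norm_sub_sq_real, real_inner_comm a b]
    ring
  rw [hid]
  nlinarith [Real.rpow_nonneg (norm_nonneg a) p, sq_nonneg ‖a - b‖]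

def eta₂ (r μ β : ℝ) : ℝ :=
  (r - 3) / (2 * μ * (r - 1)) * (2 / (β * μ * (r - 1))) ^ (2 / (r - 3))

theorem sq_div_le_rpow_add_eta₂ {r μ β : ℝ} (hr : 3 < r) (hμ : 0 < μ) (hβ : 0 < β)
    {s : ℝ} (hs : 0 ≤ s) :
    s ^ 2 / (2 * μ) ≤ β / 2 * s ^ (r - 1) + eta₂ r μ β := by
  have hr1 : 0 < r - 1 := by linarith
  have hr3 : 0 < r - 3 := by linarith
  have hw : 2 / (r - 1) + (r - 3) / (r - 1) = 1 := by field_simp; ring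
  have amgm := Real.geom_mean_le_arith_mean2_weighted (p₁ := β * (r - 1) / 4 * s ^ (r - 1))
    (p₂ := 1 / (2 * μ) * (2 / (β * μ * (r - 1))) ^ (2 / (r - 3))) (by positivity) (by positivity)
    (by positivity) (by positivity) hw
  have h₁ : 2 / (r - 1) * (β * (r - 1) / 4 * s ^ (r - 1)) = β / 2 * s ^ (r - 1) := by
    field_simp; ring
  have h₂ : (r - 3) / (r - 1) * (1 / (2 * μ) * (2 / (β * μ * (r - 1))) ^ (2 / (r - 3)))
      = eta₂ r μ β := by
    rw [eta₂]; field_simp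
  have hgeom : (β * (r - 1) / 4 * s ^ (r - 1)) ^ (2 / (r - 1))
      * (1 / (2 * μ) * (2 / (β * μ * (r - 1))) ^ (2 / (r - 3))) ^ ((r - 3) / (r - 1))
      = s ^ 2 / (2 * μ) := by
    have hc : β * (r - 1) / 4 * (2 / (β * μ * (r - 1))) = 1 / (2 * μ) := by
      field_simp; ring
    have hs2 : (s ^ (r - 1)) ^ (2 / (r - 1)) = s ^ 2 := by
      rw [← Real.rpow_mul hs, mul_div_cancel₀ _ hr1.ne', Real.rpow_two]
    have hexp : 2 / (r - 3) * ((r - 3) / (r - 1)) = 2 / (r - 1) := by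
      field_simp
    rw [Real.mul_rpow (by positivity) (by positivity), hs2,
      Real.mul_rpow (by positivity) (by positivity), ← Real.rpow_mul (by positivity), hexp]
    calc (β * (r - 1) / 4) ^ (2 / (r - 1)) * s ^ 2
          * ((1 / (2 * μ)) ^ ((r - 3) / (r - 1)) * (2 / (β * μ * (r - 1))) ^ (2 / (r - 1)))
        = s ^ 2 * ((β * (r - 1) / 4 * (2 / (β * μ * (r - 1)))) ^ (2 / (r - 1))
            * (1 / (2 * μ)) ^ ((r - 3) / (r - 1))) := by
          rw [Real.mul_rpow (by positivity) (by positivity)]; ring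
      _ = s ^ 2 / (2 * μ) := by
          rw [hc, ← Real.rpow_add (by positivity), hw, Real.rpow_one, mul_one_div]
  rwa [h₁, h₂, hgeom] at amgm

theorem sum_sum_mul_mul_le {ι κ : Type*} [Fintype ι] [Fintype κ] {μ : ℝ} (hμ : 0 < μ)
    (c : ι → ℝ) (M : ι → κ → ℝ) (b : κ → ℝ) :
    ∑ i, ∑ j, c i * M i j * b j
      ≤ μ / 2 * ∑ i, ∑ j, M i j ^ 2 + 1 / (2 * μ) * ((∑ i, c i ^ 2) * ∑ j, b j ^ 2) := by
  have amgm : ∀ x y z : ℝ, x * y * z ≤ μ / 2 * y ^ 2 + 1 / (2 * μ) * (x ^ 2 * z ^ 2) := by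
    intro x y z
    have hsq : μ / 2 * y ^ 2 + 1 / (2 * μ) * (x ^ 2 * z ^ 2) - x * y * z
        = (μ * y - x * z) ^ 2 / (2 * μ) := by
      field_simp; ring
    rw [← sub_nonneg, hsq]
    positivity
  calc ∑ i, ∑ j, c i * M i j * b j
      ≤ ∑ i, ∑ j, (μ / 2 * M i j ^ 2 + 1 / (2 * μ) * (c i ^ 2 * b j ^ 2)) :=
        Finset.sum_le_sum fun i _ => Finset.sum_le_sum fun j _ => amgm _ _ _
    _ = _ := by
        simp only [Finset.sum_add_distrib, ← Finset.mul_sum, Finset.sum_mul_sum]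

theorem sum_norm_rpow_mul_sub_mul_sub_eq_inner {ι : Type*} [Fintype ι] (p : ℝ)
    (a b : EuclideanSpace ℝ ι) :
    ∑ j, (‖a‖ ^ p * a j - ‖b‖ ^ p * b j) * (a j - b j)
      = inner ℝ (‖a‖ ^ p • a - ‖b‖ ^ p • b) (a - b) := by
  simp [PiLp.inner_apply, mul_comm]

theorem monotonicity_integrand_nonneg {ι : Type*} [Fintype ι] {r μ β : ℝ} (hr : 3 < r)
    (hμ : 0 < μ) (hβ : 0 < β) (a b : EuclideanSpace ℝ ι) (M : ι → ι → ℝ) :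
    0 ≤ μ * ∑ i, ∑ j, M i j ^ 2
      - ∑ i, ∑ j, (a - b) i * M i j * b j
      + β * ∑ j, (‖a‖ ^ (r - 1) * a j - ‖b‖ ^ (r - 1) * b j) * (a j - b j)
      + eta₂ r μ β * ‖a - b‖ ^ 2 := by
  have hconv := sum_sum_mul_mul_le hμ (fun i => (a - b) i) M b
  rw [← EuclideanSpace.real_norm_sq_eq, ← EuclideanSpace.real_norm_sq_eq] at hconv
  have hdamp := half_norm_rpow_mul_norm_sub_sq_le_inner (by linarith : (0 : ℝ) ≤ r - 1) a b
  rw [← sum_norm_rpow_mul_sub_mul_sub_eq_inner] at hdamp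
  have hdamp' := mul_le_mul_of_nonneg_left hdamp hβ.le
  have hyoung := mul_le_mul_of_nonneg_right
    (sq_div_le_rpow_add_eta₂ hr hμ hβ (norm_nonneg b)) (sq_nonneg ‖a - b‖)
  have hgrad : 0 ≤ μ * ∑ i, ∑ j, M i j ^ 2 := by positivity
  linear_combination hconv + hdamp' + hyoung + hgrad / 2

theorem stmt10_general (L r μ β : ℝ) (hr : 3 < r) (hμ : 0 < μ) (hβ : 0 < β)
    (u₁ u₂ : E3 → E3)
    (h1 : ContDiff ℝ (⊤ : ℕ∞) u₁) (h2 : ContDiff ℝ (⊤ : ℕ∞) u₂) :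
    0 ≤ μ * VnormSq L (u₁ - u₂)
        - triB L (u₁ - u₂) (u₁ - u₂) u₂
        + β * (∫ x in box L, ∑ j,
            (‖u₁ x‖ ^ (r - 1) * u₁ x j - ‖u₂ x‖ ^ (r - 1) * u₂ x j)
              * (u₁ x j - u₂ x j))
        + ((r - 3) / (2 * μ * (r - 1))) * (2 / (β * μ * (r - 1))) ^ (2 / (r - 3))
          * ∫ x in box L, ‖u₁ x - u₂ x‖ ^ 2 := by
  have hDw : Continuous (fderiv ℝ (u₁ - u₂)) := (h1.sub h2).continuous_fderiv (by simp)
  have hc1 := h1.continuous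
  have hc2 := h2.continuous
  have hint (f : E3 → ℝ) (hf : Continuous f) : Integrable f (volume.restrict (box L)) :=
    hf.continuousOn.integrableOn_compact (isCompact_box L)
  have key := setIntegral_nonneg (μ := volume) (isCompact_box L).isClosed.measurableSet fun x _ =>
    monotonicity_integrand_nonneg hr hμ hβ (u₁ x) (u₂ x) fun i j => fderiv ℝ (u₁ - u₂) x (e3 i) j
  rw [integral_add, integral_add, integral_sub, integral_const_mul, integral_const_mul,
    integral_const_mul] at key
  · exact key
  all_goals exact hint _ (by fun_prop (disch := linarith))

/-- Monotonicity of `G(u) = μAu + B(u) + βC(u)` for `r > 3`: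
`⟨G(u₁)-G(u₂), u₁-u₂⟩ + η₂‖u₁-u₂‖_{L²}² ≥ 0` where
`η₂ = [(r-3)/(2μ(r-1))](2/(βμ(r-1)))^{2/(r-3)}`.  The pairing is expressed via
`⟨A(u₁-u₂),u₁-u₂⟩ = ‖u₁-u₂‖_V²`, `⟨B(u₁)-B(u₂),u₁-u₂⟩ = -b(u₁-u₂,u₁-u₂,u₂)`
and the concrete `L^{(r+1)/r}`–`L^{r+1}` pairing for `C`. -/
theorem stmt10 (L r μ β : ℝ) (hL : 0 < L) (hr : 3 < r) (hμ : 0 < μ) (hβ : 0 < β)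
    (u₁ u₂ : E3 → E3)
    (h1 : ContDiff ℝ (⊤ : ℕ∞) u₁) (h2 : ContDiff ℝ (⊤ : ℕ∞) u₂)
    (h1p : Periodic3 L u₁) (h2p : Periodic3 L u₂)
    (h1d : divFree u₁) (h2d : divFree u₂) :
    0 ≤ μ * VnormSq L (u₁ - u₂)
        - triB L (u₁ - u₂) (u₁ - u₂) u₂
        + β * (∫ x in box L, ∑ j,
            (‖u₁ x‖ ^ (r - 1) * u₁ x j - ‖u₂ x‖ ^ (r - 1) * u₂ x j)
              * (u₁ x j - u₂ x j))
        + ((r - 3) / (2 * μ * (r - 1))) * (2 / (β * μ * (r - 1))) ^ (2 / (r - 3))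
          * ∫ x in box L, ‖u₁ x - u₂ x‖ ^ 2 :=
  stmt10_general L r μ β hr hμ hβ u₁ u₂ h1 h2
end
end

section
/- For r ≥ 3, all u, v ∈ L^{r+1}(T³;ℝ³) and any test field z ∈ L^{r+1}, the Taylor remainder estimate |⟨C(u) - C(v), z⟩| ≤ r 2^{r-2} ( ‖|u|^{(r-1)/2}(u-v)‖_{L²} ‖u‖_{L^{r+1}}^{(r-1)/2} + ‖|v|^{(r-1)/2}(u-v)‖_{L²} ‖v‖_{L^{r+1}}^{(r-1)/2} ) ‖z‖_{L^{r+1}} holds, where C(w) = P(|w|^{r-1}w). -/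
open MeasureTheory Real
noncomputable section

/-! For `p = r - 1 ≥ 1` and `‖b‖ ≤ ‖a‖`, split `‖a‖ ^ p • a - ‖b‖ ^ p • b` as
`‖a‖ ^ p • (a - b) + (‖a‖ ^ p - ‖b‖ ^ p) • b`; the tangent-line inequality for the convex function
`t ↦ t ^ p` bounds the second term, giving the pointwise estimate
`‖‖a‖ ^ p • a - ‖b‖ ^ p • b‖ ≤ r (‖a‖ ^ p + ‖b‖ ^ p) ‖a - b‖`. After pairing with `z` and
integrating, each term `∫ |w| ^ (r - 1) |u - v| |z|` is split by Cauchy–Schwarz into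
`(∫ |w| ^ (r - 1) |u - v| ^ 2) ^ (1/2)` and `(∫ |w| ^ (r - 1) |z| ^ 2) ^ (1/2)`, and Hölder with
exponents `(r + 1) / (r - 1)` and `(r + 1) / 2` bounds the latter by
`‖w‖_{r+1} ^ ((r - 1) / 2) ‖z‖_{r+1}`. -/

theorem rpow_sub_rpow_le_mul_rpow_mul_sub {p a b : ℝ} (hp : 1 ≤ p) (hb : 0 ≤ b) (hba : b ≤ a) :
    a ^ p - b ^ p ≤ p * a ^ (p - 1) * (a - b) := by
  rcases hba.eq_or_lt with rfl | hlt
  · simp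
  have hslope := (convexOn_rpow hp).slope_le_of_hasDerivAt hb (hb.trans hlt.le) hlt
    (hasDerivAt_rpow_const (Or.inr hp))
  rwa [slope_def_field, div_le_iff₀ (sub_pos.2 hlt)] at hslope

section NormedSpace

variable {E : Type*} [NormedAddCommGroup E] [NormedSpace ℝ E] {p : ℝ}

theorem norm_rpow_smul_sub_rpow_smul_le_of_norm_le (hp : 1 ≤ p) {a b : E} (hba : ‖b‖ ≤ ‖a‖) :
    ‖‖a‖ ^ p • a - ‖b‖ ^ p • b‖ ≤ (p + 1) * ‖a‖ ^ p * ‖a - b‖ := by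
  have hb := norm_nonneg b
  have hpow : ‖a‖ ^ (p - 1) * ‖b‖ ≤ ‖a‖ ^ p :=
    calc ‖a‖ ^ (p - 1) * ‖b‖ ≤ ‖a‖ ^ (p - 1) * ‖a‖ := by gcongr
      _ = ‖a‖ ^ p := by rw [← rpow_add_one' (norm_nonneg a) (by linarith), sub_add_cancel]
  calc ‖‖a‖ ^ p • a - ‖b‖ ^ p • b‖ = ‖‖a‖ ^ p • (a - b) + (‖a‖ ^ p - ‖b‖ ^ p) • b‖ := by
        rw [smul_sub, sub_smul]; abel_nf
    _ ≤ ‖a‖ ^ p * ‖a - b‖ + (‖a‖ ^ p - ‖b‖ ^ p) * ‖b‖ := by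
        refine (norm_add_le _ _).trans_eq ?_
        rw [norm_smul, norm_smul, norm_of_nonneg (by positivity),
          norm_of_nonneg (sub_nonneg.2 (rpow_le_rpow hb hba (by linarith)))]
    _ ≤ ‖a‖ ^ p * ‖a - b‖ + p * (‖a‖ ^ (p - 1) * ‖b‖) * (‖a‖ - ‖b‖) := by
        have := rpow_sub_rpow_le_mul_rpow_mul_sub hp hb hba
        nlinarith
    _ ≤ ‖a‖ ^ p * ‖a - b‖ + p * ‖a‖ ^ p * ‖a - b‖ := by
        gcongr
        exact norm_sub_norm_le a b
    _ = (p + 1) * ‖a‖ ^ p * ‖a - b‖ := by ring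

theorem norm_rpow_smul_sub_rpow_smul_le (hp : 1 ≤ p) (a b : E) :
    ‖‖a‖ ^ p • a - ‖b‖ ^ p • b‖ ≤ (p + 1) * (‖a‖ ^ p + ‖b‖ ^ p) * ‖a - b‖ := by
  wlog hba : ‖b‖ ≤ ‖a‖ generalizing a b
  · rw [norm_sub_rev, add_comm (‖a‖ ^ p), norm_sub_rev a]
    exact this b a (le_of_not_ge hba)
  calc _ ≤ (p + 1) * ‖a‖ ^ p * ‖a - b‖ := norm_rpow_smul_sub_rpow_smul_le_of_norm_le hp hba
    _ ≤ _ := by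
      gcongr
      exact le_add_of_nonneg_right (by positivity)

end NormedSpace

theorem abs_sum_rpow_mul_sub_rpow_mul_mul_le {ι : Type*} [Fintype ι] {p : ℝ} (hp : 1 ≤ p)
    (a b z : EuclideanSpace ℝ ι) :
    |∑ j, (‖a‖ ^ p * a j - ‖b‖ ^ p * b j) * z j|
      ≤ (p + 1) * (‖a‖ ^ p + ‖b‖ ^ p) * ‖a - b‖ * ‖z‖ := by
  have hinner : ∑ j, (‖a‖ ^ p * a j - ‖b‖ ^ p * b j) * z j
      = inner ℝ (‖a‖ ^ p • a - ‖b‖ ^ p • b) z := by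
    simp [PiLp.inner_apply, mul_comm]
  rw [hinner]
  exact (abs_real_inner_le_norm _ _).trans
    (by gcongr; exact norm_rpow_smul_sub_rpow_smul_le hp a b)

section Integral

variable {α : Type*} [MeasurableSpace α] {μ : Measure α} {f g h : α → ℝ}

theorem aestronglyMeasurable_of_integrable_rpow {p : ℝ} (hp : p ≠ 0) (hf : 0 ≤ f)
    (hi : Integrable (fun x => f x ^ p) μ) : AEStronglyMeasurable f μ := by
  have hf_eq : f = fun x => (f x ^ p) ^ p⁻¹ := funext fun x => (rpow_rpow_inv (hf x) hp).symm
  rw [hf_eq]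
  exact (hi.aemeasurable.pow_const p⁻¹).aestronglyMeasurable

theorem memLp_ofReal_of_integrable_rpow {p : ℝ} (hp : 0 < p) (hf : 0 ≤ f)
    (hi : Integrable (fun x => f x ^ p) μ) : MemLp f (ENNReal.ofReal p) μ := by
  refine (integrable_norm_rpow_iff (aestronglyMeasurable_of_integrable_rpow hp.ne' hf hi)
    (by simpa using hp) ENNReal.ofReal_ne_top).1 ?_
  simpa [ENNReal.toReal_ofReal hp.le, norm_of_nonneg (hf _)] using hi

theorem integral_rpow_mul_rpow_le {s t : ℝ} (hs : 0 < s) (ht : 0 < t) (hf : 0 ≤ f) (hg : 0 ≤ g)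
    (hfi : Integrable (fun x => f x ^ (s + t)) μ) (hgi : Integrable (fun x => g x ^ (s + t)) μ) :
    Integrable (fun x => f x ^ s * g x ^ t) μ ∧
      ∫ x, f x ^ s * g x ^ t ∂μ
        ≤ (∫ x, f x ^ (s + t) ∂μ) ^ (s / (s + t)) * (∫ x, g x ^ (s + t) ∂μ) ^ (t / (s + t)) := by
  have hconj : ((s + t) / s).HolderConjugate ((s + t) / t) := by
    rw [holderConjugate_iff]
    refine ⟨by rw [lt_div_iff₀ hs]; linarith, ?_⟩
    rw [inv_div, inv_div, ← add_div, div_self (by positivity)]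
  have hpow : ∀ {φ : α → ℝ} {q : ℝ}, 0 ≤ φ → 0 < q →
      (fun x => (φ x ^ q) ^ ((s + t) / q)) = fun x => φ x ^ (s + t) := fun hφ hq =>
    funext fun x => by rw [← rpow_mul (hφ x), mul_div_cancel₀ _ hq.ne']
  have hF : MemLp (fun x => f x ^ s) (ENNReal.ofReal ((s + t) / s)) μ :=
    memLp_ofReal_of_integrable_rpow (by positivity) (fun x => rpow_nonneg (hf x) s)
      (by rwa [hpow hf hs])
  have hG : MemLp (fun x => g x ^ t) (ENNReal.ofReal ((s + t) / t)) μ :=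
    memLp_ofReal_of_integrable_rpow (by positivity) (fun x => rpow_nonneg (hg x) t)
      (by rwa [hpow hg ht])
  have := hconj.ennrealOfReal
  refine ⟨hF.integrable_mul hG, ?_⟩
  have := integral_mul_le_Lp_mul_Lq_of_nonneg hconj
    (ae_of_all _ fun x => rpow_nonneg (hf x) s) (ae_of_all _ fun x => rpow_nonneg (hg x) t) hF hG
  rwa [hpow hf hs, hpow hg ht, one_div_div, one_div_div] at this

theorem integral_rpow_mul_mul_le {r : ℝ} (hr : 1 < r) (hf : 0 ≤ f) (hg : 0 ≤ g) (hh : 0 ≤ h)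
    (hfi : Integrable (fun x => f x ^ (r + 1)) μ) (hgi : Integrable (fun x => g x ^ (r + 1)) μ)
    (hfh : Integrable (fun x => f x ^ (r - 1) * h x ^ 2) μ) :
    Integrable (fun x => f x ^ (r - 1) * h x * g x) μ ∧
      ∫ x, f x ^ (r - 1) * h x * g x ∂μ
        ≤ (∫ x, f x ^ (r - 1) * h x ^ 2 ∂μ) ^ ((1 : ℝ) / 2)
          * ((∫ x, f x ^ (r + 1) ∂μ) ^ (1 / (r + 1))) ^ ((r - 1) / 2)
          * (∫ x, g x ^ (r + 1) ∂μ) ^ (1 / (r + 1)) := by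
  have hr' : r - 1 + 2 = r + 1 := by ring
  obtain ⟨hfgi, hfg⟩ := integral_rpow_mul_rpow_le (μ := μ) (s := r - 1) (t := 2)
    (by linarith) two_pos hf hg (by rwa [hr']) (by rwa [hr'])
  rw [hr'] at hfg
  -- `h` need not be measurable, only `f ^ (r - 1) * h ^ 2` is integrable; hence Cauchy–Schwarz
  -- is applied to `F = √(f ^ (r - 1) * h ^ 2)` and `G = √(f ^ (r - 1)) * g`.
  set F := fun x => √(f x ^ (r - 1) * h x ^ 2)
  set G := fun x => √(f x ^ (r - 1)) * g x
  have hF : ∀ x, F x ^ (1 + 1 : ℝ) = f x ^ (r - 1) * h x ^ 2 := fun x => by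
    rw [one_add_one_eq_two, rpow_two, sq_sqrt (mul_nonneg (rpow_nonneg (hf x) _) (sq_nonneg _))]
  have hG : ∀ x, G x ^ (1 + 1 : ℝ) = f x ^ (r - 1) * g x ^ (2 : ℝ) := fun x => by
    rw [one_add_one_eq_two, rpow_two, rpow_two, mul_pow, sq_sqrt (rpow_nonneg (hf x) _)]
  have hFG : ∀ x, F x ^ (1 : ℝ) * G x ^ (1 : ℝ) = f x ^ (r - 1) * h x * g x := fun x => by
    have := rpow_nonneg (hf x) (r - 1)
    simp only [F, G, rpow_one, sqrt_mul this, sqrt_sq (hh x)]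
    linear_combination (h x * g x) * mul_self_sqrt this
  obtain ⟨hFGi, hCS⟩ := integral_rpow_mul_rpow_le (μ := μ) (f := F) (g := G) one_pos one_pos
    (fun x => sqrt_nonneg _) (fun x => mul_nonneg (sqrt_nonneg _) (hg x))
    (by simp only [hF]; exact hfh) (by simp only [hG]; exact hfgi)
  simp only [hF, hG, hFG, show (1 : ℝ) / (1 + 1) = 1 / 2 by norm_num] at hFGi hCS
  have hA : 0 ≤ ∫ x, f x ^ (r + 1) ∂μ := integral_nonneg fun x => rpow_nonneg (hf x) _
  have hB : 0 ≤ ∫ x, g x ^ (r + 1) ∂μ := integral_nonneg fun x => rpow_nonneg (hg x) _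
  have hweight : (∫ x, f x ^ (r - 1) * g x ^ (2 : ℝ) ∂μ) ^ ((1 : ℝ) / 2)
      ≤ ((∫ x, f x ^ (r + 1) ∂μ) ^ (1 / (r + 1))) ^ ((r - 1) / 2)
        * (∫ x, g x ^ (r + 1) ∂μ) ^ (1 / (r + 1)) :=
    calc (∫ x, f x ^ (r - 1) * g x ^ (2 : ℝ) ∂μ) ^ ((1 : ℝ) / 2)
        ≤ ((∫ x, f x ^ (r + 1) ∂μ) ^ ((r - 1) / (r + 1))
            * (∫ x, g x ^ (r + 1) ∂μ) ^ (2 / (r + 1))) ^ ((1 : ℝ) / 2) := by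
          gcongr
          exact integral_nonneg fun x => mul_nonneg (rpow_nonneg (hf x) _) (rpow_nonneg (hg x) _)
      _ = _ := by
          rw [mul_rpow (by positivity) (by positivity), ← rpow_mul hA, ← rpow_mul hA,
            ← rpow_mul hB]
          congr 2 <;> ring
  refine ⟨hFGi, hCS.trans ?_⟩
  rw [mul_assoc]
  exact mul_le_mul_of_nonneg_left hweight (rpow_nonneg (integral_nonneg fun x =>
    mul_nonneg (rpow_nonneg (hf x) _) (sq_nonneg _)) _)

theorem abs_integral_sum_rpow_mul_sub_rpow_mul_mul_le {ι : Type*} [Fintype ι] {r : ℝ} (hr : 2 ≤ r)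
    {u v z : α → EuclideanSpace ℝ ι}
    (hu : Integrable (fun x => ‖u x‖ ^ (r + 1)) μ) (hv : Integrable (fun x => ‖v x‖ ^ (r + 1)) μ)
    (hz : Integrable (fun x => ‖z x‖ ^ (r + 1)) μ)
    (huv : Integrable (fun x => ‖u x‖ ^ (r - 1) * ‖u x - v x‖ ^ 2) μ)
    (hvu : Integrable (fun x => ‖v x‖ ^ (r - 1) * ‖u x - v x‖ ^ 2) μ) :
    |∫ x, ∑ j, (‖u x‖ ^ (r - 1) * u x j - ‖v x‖ ^ (r - 1) * v x j) * z x j ∂μ|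
      ≤ r * ((∫ x, ‖u x‖ ^ (r - 1) * ‖u x - v x‖ ^ 2 ∂μ) ^ ((1 : ℝ) / 2)
              * ((∫ x, ‖u x‖ ^ (r + 1) ∂μ) ^ (1 / (r + 1))) ^ ((r - 1) / 2)
            + (∫ x, ‖v x‖ ^ (r - 1) * ‖u x - v x‖ ^ 2 ∂μ) ^ ((1 : ℝ) / 2)
              * ((∫ x, ‖v x‖ ^ (r + 1) ∂μ) ^ (1 / (r + 1))) ^ ((r - 1) / 2))
          * (∫ x, ‖z x‖ ^ (r + 1) ∂μ) ^ (1 / (r + 1)) := by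
  obtain ⟨hui, hu'⟩ := integral_rpow_mul_mul_le (by linarith) (fun x => norm_nonneg (u x))
    (fun x => norm_nonneg (z x)) (fun x => norm_nonneg (u x - v x)) hu hz huv
  obtain ⟨hvi, hv'⟩ := integral_rpow_mul_mul_le (by linarith) (fun x => norm_nonneg (v x))
    (fun x => norm_nonneg (z x)) (fun x => norm_nonneg (u x - v x)) hv hz hvu
  have hpt : ∀ x, |∑ j, (‖u x‖ ^ (r - 1) * u x j - ‖v x‖ ^ (r - 1) * v x j) * z x j|
      ≤ r * (‖u x‖ ^ (r - 1) * ‖u x - v x‖ * ‖z x‖ + ‖v x‖ ^ (r - 1) * ‖u x - v x‖ * ‖z x‖) :=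
    fun x => by
      have := abs_sum_rpow_mul_sub_rpow_mul_mul_le (p := r - 1) (by linarith) (u x) (v x) (z x)
      rw [sub_add_cancel] at this
      linarith
  calc _ ≤ ∫ x, |∑ j, (‖u x‖ ^ (r - 1) * u x j - ‖v x‖ ^ (r - 1) * v x j) * z x j| ∂μ :=
        abs_integral_le_integral_abs
    _ ≤ ∫ x, r * (‖u x‖ ^ (r - 1) * ‖u x - v x‖ * ‖z x‖
          + ‖v x‖ ^ (r - 1) * ‖u x - v x‖ * ‖z x‖) ∂μ :=
        integral_mono_of_nonneg (ae_of_all _ fun _ => abs_nonneg _) ((hui.add hvi).const_mul r)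
          (ae_of_all _ hpt)
    _ = r * ((∫ x, ‖u x‖ ^ (r - 1) * ‖u x - v x‖ * ‖z x‖ ∂μ)
          + ∫ x, ‖v x‖ ^ (r - 1) * ‖u x - v x‖ * ‖z x‖ ∂μ) := by
        rw [integral_const_mul, integral_add hui hvi]
    _ ≤ _ := by
        rw [mul_assoc, add_mul]
        exact mul_le_mul_of_nonneg_left (add_le_add hu' hv') (by linarith)

end Integral

theorem stmt18_general (L r : ℝ) (hr : 3 ≤ r)
    (u v z : E3 → E3)
    (hu : IntegrableOn (fun x => ‖u x‖ ^ (r + 1)) (box L))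
    (hv : IntegrableOn (fun x => ‖v x‖ ^ (r + 1)) (box L))
    (hz : IntegrableOn (fun x => ‖z x‖ ^ (r + 1)) (box L))
    (h1 : IntegrableOn (fun x => ‖u x‖ ^ (r - 1) * ‖u x - v x‖ ^ 2) (box L))
    (h2 : IntegrableOn (fun x => ‖v x‖ ^ (r - 1) * ‖u x - v x‖ ^ 2) (box L)) :
    |∫ x in box L, ∑ j, (‖u x‖ ^ (r - 1) * u x j - ‖v x‖ ^ (r - 1) * v x j) * z x j|
      ≤ r * (2 : ℝ) ^ (r - 2)
          * ((∫ x in box L, ‖u x‖ ^ (r - 1) * ‖u x - v x‖ ^ 2) ^ ((1 : ℝ) / 2)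
                * LpNorm L (r + 1) u ^ ((r - 1) / 2)
              + (∫ x in box L, ‖v x‖ ^ (r - 1) * ‖u x - v x‖ ^ 2) ^ ((1 : ℝ) / 2)
                * LpNorm L (r + 1) v ^ ((r - 1) / 2))
          * LpNorm L (r + 1) z := by
  refine (abs_integral_sum_rpow_mul_sub_rpow_mul_mul_le (by linarith) hu hv hz h1 h2).trans ?_
  unfold LpNorm
  gcongr
  exact le_mul_of_one_le_right (by linarith) (one_le_rpow (by norm_num) (by linarith))

/-- Taylor remainder estimate for `C(w) = P(|w|^{r-1}w)`, `r ≥ 3`: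
`|⟨C(u)-C(v), z⟩| ≤ r 2^{r-2}(‖|u|^{(r-1)/2}(u-v)‖_{L²}‖u‖_{L^{r+1}}^{(r-1)/2}
  + ‖|v|^{(r-1)/2}(u-v)‖_{L²}‖v‖_{L^{r+1}}^{(r-1)/2})‖z‖_{L^{r+1}}`,
the pairing taken as the `L^{(r+1)/r}`–`L^{r+1}` duality integral. -/
theorem stmt18 (L r : ℝ) (hL : 0 < L) (hr : 3 ≤ r)
    (u v z : E3 → E3)
    (hu : IntegrableOn (fun x => ‖u x‖ ^ (r + 1)) (box L))
    (hv : IntegrableOn (fun x => ‖v x‖ ^ (r + 1)) (box L))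
    (hz : IntegrableOn (fun x => ‖z x‖ ^ (r + 1)) (box L))
    (hpair : IntegrableOn
      (fun x => ∑ j, (‖u x‖ ^ (r - 1) * u x j - ‖v x‖ ^ (r - 1) * v x j) * z x j)
      (box L))
    (h1 : IntegrableOn (fun x => ‖u x‖ ^ (r - 1) * ‖u x - v x‖ ^ 2) (box L))
    (h2 : IntegrableOn (fun x => ‖v x‖ ^ (r - 1) * ‖u x - v x‖ ^ 2) (box L)) :
    |∫ x in box L, ∑ j, (‖u x‖ ^ (r - 1) * u x j - ‖v x‖ ^ (r - 1) * v x j) * z x j|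
      ≤ r * (2 : ℝ) ^ (r - 2)
          * ((∫ x in box L, ‖u x‖ ^ (r - 1) * ‖u x - v x‖ ^ 2) ^ ((1 : ℝ) / 2)
                * LpNorm L (r + 1) u ^ ((r - 1) / 2)
              + (∫ x in box L, ‖v x‖ ^ (r - 1) * ‖u x - v x‖ ^ 2) ^ ((1 : ℝ) / 2)
                * LpNorm L (r + 1) v ^ ((r - 1) / 2))
          * LpNorm L (r + 1) z :=
  stmt18_general L r hr u v z hu hv hz h1 h2
end
end
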